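/- arXiv:1905.09356 — 8 statements merged into one kernel-verified Lean document; each statement's English description precedes it below -/
import Mathlib

section
/- Let d ≥ 1, T ≥ 1 and constants D∞ > 0, G∞ > 0, η₁ > 0, and set the constant learning rate η = η₁/√T. Let (f_t)_{t≥1} be convex differentiable functions ℝ^d → ℝ such that ‖∇f_t(ω)‖∞ ≤ G∞ for every ω with ‖ω‖∞ ≤ D∞/2. Let (ω_t)_{t≥1} be generated by online gradient descent, ω_{t+1} = ω_t − η ∇f_t(ω_t), and assume ‖ω_t‖∞ ≤ D∞/2 for all t. Then for every p ≥ 1 and every ω* ∈ ℝ^d with ‖ω*‖∞ ≤ D∞/2, Σ_{t=p}^{p+T} ( f_t(ω_t) − f_t(ω*) ) ≤ d·D∞²·√T/(2η₁) + (T+1)·d·G∞²·η₁/(2√T); in particular the regret with rolling window of size T is O(√T), uniformly in p. -/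
/-!
Convexity bounds the instantaneous regret `f_t(ω_t) - f_t(ω*)` by `⟪∇f_t(ω_t), ω_t - ω*⟫`, and
expanding `‖ω_{t+1} - ω*‖²` for the gradient step rewrites this inner product as
`(‖ω_t - ω*‖² - ‖ω_{t+1} - ω*‖²) / (2η) + η‖∇f_t(ω_t)‖² / 2`. Summed over the window the first
part telescopes to at most `‖ω_p - ω*‖² / (2η)`, whatever the position `p`. The `ℓ∞` bounds give
`‖ω_p - ω*‖² ≤ d D∞²` and `‖∇f_t(ω_t)‖² ≤ d G∞²`, and `η = η₁/√T` balances the two terms.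
-/

open Finset

theorem EuclideanSpace.real_norm_sq_le_card_mul_sq {ι : Type*} [Fintype ι]
    {x : EuclideanSpace ℝ ι} {c : ℝ} (hx : ∀ i, |x i| ≤ c) :
    ‖x‖ ^ 2 ≤ Fintype.card ι * c ^ 2 := by
  rw [EuclideanSpace.real_norm_sq_eq, ← nsmul_eq_mul, ← card_univ, ← sum_const]
  exact sum_le_sum fun i _ ↦ sq_abs (x i) ▸ pow_le_pow_left₀ (abs_nonneg _) (hx i) 2

theorem ConvexOn.add_apply_sub_le_of_hasFDerivAt {E : Type*} [NormedAddCommGroup E]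
    [NormedSpace ℝ E] {s : Set E} {f : E → ℝ} {f' : E →L[ℝ] ℝ} {x y : E}
    (hf : ConvexOn ℝ s f) (hx : x ∈ s) (hy : y ∈ s) (hf' : HasFDerivAt f f' x) :
    f x + f' (y - x) ≤ f y := by
  let l : ℝ →ᵃ[ℝ] E := AffineMap.lineMap x y
  have hl : ConvexOn ℝ (Set.Icc 0 1) (f ∘ l) :=
    (hf.comp_affineMap l).subset (hf.1.mapsTo_lineMap hx hy) (convex_Icc 0 1)
  have hl' : HasDerivAt (f ∘ l) (f' (y - x)) 0 :=
    HasFDerivAt.comp_hasDerivAt (0 : ℝ) (by simpa [l] using hf') AffineMap.hasDerivAt_lineMap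
  have hslope := hl.le_slope_of_hasDerivAt (Set.left_mem_Icc.2 zero_le_one)
    (Set.right_mem_Icc.2 zero_le_one) one_pos hl'
  simp only [slope_def_field, Function.comp_apply, l, AffineMap.lineMap_apply_zero,
    AffineMap.lineMap_apply_one, sub_zero, div_one] at hslope
  linarith

section InnerProductSpace

variable {E : Type*} [NormedAddCommGroup E] [InnerProductSpace ℝ E]

theorem ConvexOn.add_inner_sub_le_of_hasGradientAt [CompleteSpace E] {s : Set E} {f : E → ℝ}
    {g x y : E} (hf : ConvexOn ℝ s f) (hx : x ∈ s) (hy : y ∈ s) (hg : HasGradientAt f g x) :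
    f x + inner ℝ g (y - x) ≤ f y :=
  hf.add_apply_sub_le_of_hasFDerivAt hx hy hg.hasFDerivAt

theorem norm_sub_smul_sub_sq (x g u : E) (η : ℝ) :
    ‖x - η • g - u‖ ^ 2 = ‖x - u‖ ^ 2 - 2 * η * inner ℝ g (x - u) + η ^ 2 * ‖g‖ ^ 2 := by
  rw [sub_right_comm, norm_sub_sq_real, real_inner_smul_right, norm_smul, mul_pow,
    Real.norm_eq_abs, sq_abs, real_inner_comm]
  ring

theorem ConvexOn.sub_le_of_gradient_step [CompleteSpace E] {f : E → ℝ} {g x : E} {η : ℝ}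
    (hη : 0 < η) (hf : ConvexOn ℝ Set.univ f) (hg : HasGradientAt f g x) (u : E) :
    f x - f u ≤ (‖x - u‖ ^ 2 - ‖x - η • g - u‖ ^ 2) / (2 * η) + η / 2 * ‖g‖ ^ 2 := by
  have hconv := hf.add_inner_sub_le_of_hasGradientAt (Set.mem_univ x) (Set.mem_univ u) hg
  have hinner : inner ℝ g (u - x) = -inner ℝ g (x - u) := by rw [← inner_neg_right, neg_sub]
  have hdescent : (‖x - u‖ ^ 2 - ‖x - η • g - u‖ ^ 2) / (2 * η) + η / 2 * ‖g‖ ^ 2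
      = inner ℝ g (x - u) := by
    rw [norm_sub_smul_sub_sq]
    field_simp
    ring
  linarith

theorem ogd_regret_le [CompleteSpace E] {f : ℕ → E → ℝ} {g : ℕ → E → E} {ω : ℕ → E}
    {η G : ℝ} (hη : 0 < η) (hf : ∀ t, ConvexOn ℝ Set.univ (f t))
    (hg : ∀ t, HasGradientAt (f t) (g t (ω t)) (ω t))
    (hω : ∀ t, ω (t + 1) = ω t - η • g t (ω t)) (hG : ∀ t, ‖g t (ω t)‖ ≤ G) (u : E) (p n : ℕ) :
    ∑ t ∈ Icc p (p + n), (f t (ω t) - f t u)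
      ≤ ‖ω p - u‖ ^ 2 / (2 * η) + (n + 1) * (η / 2 * G ^ 2) := by
  set a : ℕ → ℝ := fun t ↦ ‖ω t - u‖ ^ 2
  have hstep (t : ℕ) : f t (ω t) - f t u ≤ (a t - a (t + 1)) / (2 * η) + η / 2 * G ^ 2 := by
    have hsq := pow_le_pow_left₀ (norm_nonneg _) (hG t) 2
    have hsq' := mul_le_mul_of_nonneg_left hsq (by positivity : 0 ≤ η / 2)
    have hdescent := (hf t).sub_le_of_gradient_step hη (hg t) u
    simp only [a, hω t]
    linarith
  have htel : ∑ t ∈ Icc p (p + n), (a t - a (t + 1)) = a p - a (p + n + 1) := by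
    rw [← neg_sub, ← sum_Icc_sub (le_add_right le_rfl), ← sum_neg_distrib]
    simp only [neg_sub]
  calc ∑ t ∈ Icc p (p + n), (f t (ω t) - f t u)
      ≤ ∑ t ∈ Icc p (p + n), ((a t - a (t + 1)) / (2 * η) + η / 2 * G ^ 2) :=
        sum_le_sum fun t _ ↦ hstep t
    _ = (a p - a (p + n + 1)) / (2 * η) + (n + 1) * (η / 2 * G ^ 2) := by
        rw [sum_add_distrib, ← sum_div, htel, sum_const, Nat.card_Icc, nsmul_eq_mul,
          show p + n + 1 - p = n + 1 by omega]
        push_cast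
        ring
    _ ≤ a p / (2 * η) + (n + 1) * (η / 2 * G ^ 2) := by
        gcongr
        exact sub_le_self _ (sq_nonneg _)

end InnerProductSpace

theorem ogd_rolling_window_regret_general
    (d T : ℕ) (hT : 1 ≤ T)
    (Dinf Ginf η₁ : ℝ) (hη₁ : 0 < η₁)
    (η : ℝ) (hη : η = η₁ / Real.sqrt T)
    (f : ℕ → EuclideanSpace ℝ (Fin d) → ℝ)
    (g : ℕ → EuclideanSpace ℝ (Fin d) → EuclideanSpace ℝ (Fin d))
    (hconv : ∀ t, ConvexOn ℝ Set.univ (f t))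
    (hgrad : ∀ t x, HasGradientAt (f t) (g t x) x)
    (hgradbound : ∀ t (x : EuclideanSpace ℝ (Fin d)),
      (∀ i, |x i| ≤ Dinf / 2) → ∀ i, |g t x i| ≤ Ginf)
    (ω : ℕ → EuclideanSpace ℝ (Fin d))
    (hupdate : ∀ t, ω (t + 1) = ω t - η • g t (ω t))
    (hωbound : ∀ t i, |ω t i| ≤ Dinf / 2) :
    ∀ p : ℕ, 1 ≤ p → ∀ ωstar : EuclideanSpace ℝ (Fin d),
      (∀ i, |ωstar i| ≤ Dinf / 2) →
      ∑ t ∈ Finset.Icc p (p + T), (f t (ω t) - f t ωstar)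
        ≤ (d : ℝ) * Dinf ^ 2 * Real.sqrt T / (2 * η₁)
          + ((T : ℝ) + 1) * (d : ℝ) * Ginf ^ 2 * η₁ / (2 * Real.sqrt T) := by
  intro p _ ωstar hωstar
  have hsqrtT : 0 < Real.sqrt T := Real.sqrt_pos.2 (by exact_mod_cast hT)
  have hηpos : 0 < η := hη ▸ div_pos hη₁ hsqrtT
  have hG (t : ℕ) : ‖g t (ω t)‖ ≤ Real.sqrt (d * Ginf ^ 2) := Real.le_sqrt_of_sq_le <| by
    simpa using EuclideanSpace.real_norm_sq_le_card_mul_sq (hgradbound t (ω t) (hωbound t))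
  have hD : ‖ω p - ωstar‖ ^ 2 ≤ d * Dinf ^ 2 := by
    have hcoord (i : Fin d) : |(ω p - ωstar) i| ≤ Dinf :=
      (abs_sub (ω p i) (ωstar i)).trans (by linarith [hωbound p i, hωstar i])
    simpa using EuclideanSpace.real_norm_sq_le_card_mul_sq hcoord
  calc ∑ t ∈ Finset.Icc p (p + T), (f t (ω t) - f t ωstar)
      ≤ ‖ω p - ωstar‖ ^ 2 / (2 * η) + (T + 1) * (η / 2 * Real.sqrt (d * Ginf ^ 2) ^ 2) :=
        ogd_regret_le hηpos hconv (fun t ↦ hgrad t (ω t)) hupdate hG ωstar p T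
    _ ≤ d * Dinf ^ 2 / (2 * η) + (T + 1) * (η / 2 * (d * Ginf ^ 2)) := by
        rw [Real.sq_sqrt (by positivity)]
        gcongr
    _ = _ := by
        rw [hη]
        field_simp

/-- Online gradient descent with constant learning rate `η = η₁/√T`
achieves regret with rolling window of size `T` that is `O(√T)`, uniformly in the
position `p` of the window: for convex differentiable losses with `ℓ∞`-bounded
gradients and `ℓ∞`-bounded iterates,
`Σ_{t=p}^{p+T} (f_t(ω_t) − f_t(ω*)) ≤ d·D∞²·√T/(2η₁) + (T+1)·d·G∞²·η₁/(2√T)`. -/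
theorem ogd_rolling_window_regret
    (d T : ℕ) (hd : 1 ≤ d) (hT : 1 ≤ T)
    (Dinf Ginf η₁ : ℝ) (hD : 0 < Dinf) (hG : 0 < Ginf) (hη₁ : 0 < η₁)
    (η : ℝ) (hη : η = η₁ / Real.sqrt T)
    (f : ℕ → EuclideanSpace ℝ (Fin d) → ℝ)
    (g : ℕ → EuclideanSpace ℝ (Fin d) → EuclideanSpace ℝ (Fin d))
    (hconv : ∀ t, ConvexOn ℝ Set.univ (f t))
    (hgrad : ∀ t x, HasGradientAt (f t) (g t x) x)
    (hgradbound : ∀ t (x : EuclideanSpace ℝ (Fin d)),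
      (∀ i, |x i| ≤ Dinf / 2) → ∀ i, |g t x i| ≤ Ginf)
    (ω : ℕ → EuclideanSpace ℝ (Fin d))
    (hupdate : ∀ t, ω (t + 1) = ω t - η • g t (ω t))
    (hωbound : ∀ t i, |ω t i| ≤ Dinf / 2) :
    ∀ p : ℕ, 1 ≤ p → ∀ ωstar : EuclideanSpace ℝ (Fin d),
      (∀ i, |ωstar i| ≤ Dinf / 2) →
      ∑ t ∈ Finset.Icc p (p + T), (f t (ω t) - f t ωstar)
        ≤ (d : ℝ) * Dinf ^ 2 * Real.sqrt T / (2 * η₁)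
          + ((T : ℝ) + 1) * (d : ℝ) * Ginf ^ 2 * η₁ / (2 * Real.sqrt T) :=
  ogd_rolling_window_regret_general d T hT Dinf Ginf η₁ hη₁ η hη f g hconv hgrad hgradbound ω
    hupdate hωbound
end

section
/- Let 0 < β₁, β₂ < 1 with λ := β₁/√β₂ < 1, and let g_1, g_2, … ∈ ℝ^d satisfy ‖g_i‖∞ ≤ G∞ for all i. Define m_t = (1−β₁) Σ_{i=1}^t β₁^{t−i} g_i and v_t = (1−β₂) Σ_{i=1}^t β₂^{t−i} g_i ⊙ g_i, and let v̂_t ∈ ℝ^d satisfy v̂_{t,j} ≥ v_{t,j} for every coordinate j. Then for every p ≥ 1 and T ≥ 0, Σ_{t=p}^{T+p} Σ_{j=1}^d m_{t,j}²/√(v̂_{t,j}) ≤ ( d(1−β₁)/√(1−β₂) ) · ( T·G∞/(1−λ) + G∞/(1−λ)² ), where terms with v̂_{t,j} = 0 are interpreted as 0. In particular Σ_{t=p}^{T+p} ‖(1/⁴√v̂_t) ⊙ m_t‖² = O(T) uniformly in p. -/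
open Finset

/-!
Each term is bounded uniformly in `t` and `j`. Cauchy–Schwarz against the weights
`(1 - β₁) β₁^(t-i)`, of total mass at most `1`, gives `m² ≤ (1 - β₁) ∑ β₁^(t-i) gᵢ²`.
Writing `β₁^k gᵢ² = λ^k |gᵢ| (√β₂^k |gᵢ|)` and noting that `(1 - β₂) (√β₂^k gᵢ)²` is a single
summand of `v_t ≤ v̂_t`, the geometric series in `λ` yields
`m² / √v̂ ≤ (1 - β₁) G∞ / ((1 - λ) √(1 - β₂))`. Summing over the `T + 1` steps and `d`
coordinates, and using `1 / (1 - λ) ≤ 1 / (1 - λ)²`, gives the bound.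
-/

/-- Closed form of the recursion `m_t = β m_{t-1} + (1 - β) a_t`, `m_0 = 0`. -/
def expMovingAvg (β : ℝ) (a : ℕ → ℝ) (t : ℕ) : ℝ :=
  (1 - β) * ∑ i ∈ Icc 1 t, β ^ (t - i) * a i

lemma sum_Icc_pow_sub_le_inv {r : ℝ} (hr₀ : 0 ≤ r) (hr₁ : r < 1) (t : ℕ) :
    ∑ i ∈ Icc 1 t, r ^ (t - i) ≤ (1 - r)⁻¹ := by
  rw [← Ico_add_one_right_eq_Icc, sum_Ico_reflect _ _ le_rfl, Nat.add_sub_cancel,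
    Nat.sub_self]
  simpa using geom_sum_Ico_le_of_lt_one (m := 0) (n := t) hr₀ hr₁

lemma sq_expMovingAvg_le {β : ℝ} (hβ₀ : 0 ≤ β) (hβ₁ : β < 1) (a : ℕ → ℝ) (t : ℕ) :
    expMovingAvg β a t ^ 2 ≤ expMovingAvg β (fun i => a i ^ 2) t := by
  set W := ∑ i ∈ Icc 1 t, β ^ (t - i)
  set S := ∑ i ∈ Icc 1 t, β ^ (t - i) * a i ^ 2
  have hw : ∀ i ∈ Icc 1 t, 0 ≤ β ^ (t - i) := fun i _ => pow_nonneg hβ₀ _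
  have hcs : (∑ i ∈ Icc 1 t, β ^ (t - i) * a i) ^ 2 ≤ W * S :=
    sum_sq_le_sum_mul_sum_of_sq_le_mul _ hw
      (fun i hi => mul_nonneg (hw i hi) (sq_nonneg _)) (fun i _ => (by ring : _ = _).le)
  have hmass : (1 - β) * W ≤ 1 := by
    have := mul_le_mul_of_nonneg_left (sum_Icc_pow_sub_le_inv hβ₀ hβ₁ t) (sub_nonneg.2 hβ₁.le)
    rwa [mul_inv_cancel₀ (sub_ne_zero.2 hβ₁.ne')] at this
  have hS : 0 ≤ (1 - β) * S :=
    mul_nonneg (sub_nonneg.2 hβ₁.le) (sum_nonneg fun i hi => mul_nonneg (hw i hi) (sq_nonneg _))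
  calc expMovingAvg β a t ^ 2 ≤ (1 - β) ^ 2 * (W * S) := by
        rw [expMovingAvg, mul_pow]; gcongr
    _ = ((1 - β) * W) * ((1 - β) * S) := by ring
    _ ≤ (1 - β) * S := mul_le_of_le_one_left hS hmass

lemma sum_pow_mul_sq_le_mul_sqrt {β₁ β₂ G : ℝ} (hβ₁ : 0 ≤ β₁) (hβ₂ : 0 < β₂)
    (hρ : β₁ / √β₂ < 1) {a : ℕ → ℝ} (ha : ∀ i, 1 ≤ i → |a i| ≤ G) (t : ℕ) :
    ∑ i ∈ Icc 1 t, β₁ ^ (t - i) * a i ^ 2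
      ≤ G / (1 - β₁ / √β₂) * √(∑ i ∈ Icc 1 t, β₂ ^ (t - i) * a i ^ 2) := by
  set S := ∑ i ∈ Icc 1 t, β₂ ^ (t - i) * a i ^ 2
  set ρ := β₁ / √β₂ with hρ_def
  have hρ₀ : 0 ≤ ρ := div_nonneg hβ₁ (Real.sqrt_nonneg _)
  have hβ₁_eq : β₁ = ρ * √β₂ := by rw [hρ_def, div_mul_cancel₀ _ (Real.sqrt_pos.2 hβ₂).ne']
  have hG : 0 ≤ G := (abs_nonneg _).trans (ha 1 le_rfl)
  have hterm : ∀ i ∈ Icc 1 t, β₁ ^ (t - i) * a i ^ 2 ≤ ρ ^ (t - i) * (G * √S) := by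
    intro i hi
    have hai : |a i| ≤ G := ha i (mem_Icc.1 hi).1
    have hsingle : (√β₂ ^ (t - i) * a i) ^ 2 ≤ S := by
      rw [mul_pow, ← pow_mul, mul_comm (t - i), pow_mul, Real.sq_sqrt hβ₂.le]
      exact single_le_sum (f := fun k => β₂ ^ (t - k) * a k ^ 2)
        (fun k _ => mul_nonneg (pow_nonneg hβ₂.le _) (sq_nonneg _)) hi
    have hle := Real.abs_le_sqrt hsingle
    rw [abs_mul, abs_of_nonneg (pow_nonneg (Real.sqrt_nonneg _) _)] at hle
    calc β₁ ^ (t - i) * a i ^ 2 = ρ ^ (t - i) * (|a i| * (√β₂ ^ (t - i) * |a i|)) := by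
          rw [hβ₁_eq, mul_pow, ← sq_abs]; ring
      _ ≤ ρ ^ (t - i) * (G * √S) := by gcongr
  calc ∑ i ∈ Icc 1 t, β₁ ^ (t - i) * a i ^ 2
      ≤ (∑ i ∈ Icc 1 t, ρ ^ (t - i)) * (G * √S) := by
        rw [sum_mul]; exact sum_le_sum hterm
    _ ≤ (1 - ρ)⁻¹ * (G * √S) := by
        gcongr
        exact sum_Icc_pow_sub_le_inv hρ₀ hρ t
    _ = G / (1 - ρ) * √S := by ring

lemma sq_expMovingAvg_div_sqrt_le {β₁ β₂ G : ℝ} (hβ₁₀ : 0 ≤ β₁) (hβ₁₁ : β₁ < 1) (hβ₂₀ : 0 < β₂)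
    (hβ₂₁ : β₂ < 1) (hρ : β₁ / √β₂ < 1) {a : ℕ → ℝ} (ha : ∀ i, 1 ≤ i → |a i| ≤ G) {t : ℕ}
    {w : ℝ} (hw : expMovingAvg β₂ (fun i => a i ^ 2) t ≤ w) :
    expMovingAvg β₁ a t ^ 2 / √w ≤ (1 - β₁) / √(1 - β₂) * (G / (1 - β₁ / √β₂)) := by
  set K := (1 - β₁) / √(1 - β₂) * (G / (1 - β₁ / √β₂)) with hK_def
  set S := ∑ i ∈ Icc 1 t, β₂ ^ (t - i) * a i ^ 2
  have hG : 0 ≤ G := (abs_nonneg _).trans (ha 1 le_rfl)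
  have hK : 0 ≤ K :=
    mul_nonneg (div_nonneg (sub_nonneg.2 hβ₁₁.le) (Real.sqrt_nonneg _))
      (div_nonneg hG (sub_nonneg.2 hρ.le))
  have hsqrt : √(expMovingAvg β₂ (fun i => a i ^ 2) t) = √(1 - β₂) * √S :=
    Real.sqrt_mul (sub_nonneg.2 hβ₂₁.le) _
  have hsqrt_pos : 0 < √(1 - β₂) := Real.sqrt_pos.2 (sub_pos.2 hβ₂₁)
  -- `div_le_of_le_mul₀` also covers `√w = 0`, where the quotient is the junk value `0`.
  refine div_le_of_le_mul₀ (Real.sqrt_nonneg _) hK ?_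
  calc expMovingAvg β₁ a t ^ 2
      ≤ (1 - β₁) * ∑ i ∈ Icc 1 t, β₁ ^ (t - i) * a i ^ 2 := sq_expMovingAvg_le hβ₁₀ hβ₁₁ a t
    _ ≤ (1 - β₁) * (G / (1 - β₁ / √β₂) * √S) := by
        gcongr
        exact sum_pow_mul_sq_le_mul_sqrt hβ₁₀ hβ₂₀ hρ ha t
    _ = K * √(expMovingAvg β₂ (fun i => a i ^ 2) t) := by
        rw [hsqrt, hK_def]; field_simp
    _ ≤ K * √w := by gcongr

lemma sum_Icc_sq_expMovingAvg_div_sqrt_le {β₁ β₂ G : ℝ} (hβ₁₀ : 0 ≤ β₁) (hβ₁₁ : β₁ < 1)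
    (hβ₂₀ : 0 < β₂) (hβ₂₁ : β₂ < 1) (hρ : β₁ / √β₂ < 1) {a : ℕ → ℝ}
    (ha : ∀ i, 1 ≤ i → |a i| ≤ G) {w : ℕ → ℝ}
    (hw : ∀ t, expMovingAvg β₂ (fun i => a i ^ 2) t ≤ w t) (p T : ℕ) :
    ∑ t ∈ Icc p (T + p), expMovingAvg β₁ a t ^ 2 / √(w t)
      ≤ (1 - β₁) / √(1 - β₂) * (T * G / (1 - β₁ / √β₂) + G / (1 - β₁ / √β₂) ^ 2) := by
  set ρ := β₁ / √β₂
  have hG : 0 ≤ G := (abs_nonneg _).trans (ha 1 le_rfl)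
  have hρ₀ : 0 ≤ ρ := div_nonneg hβ₁₀ (Real.sqrt_nonneg _)
  have hgeom : G / (1 - ρ) ≤ G / (1 - ρ) ^ 2 :=
    div_le_div_of_nonneg_left hG (pow_pos (sub_pos.2 hρ) 2)
      (pow_le_of_le_one (sub_nonneg.2 hρ.le) (by linarith) two_ne_zero)
  calc ∑ t ∈ Icc p (T + p), expMovingAvg β₁ a t ^ 2 / √(w t)
      ≤ ∑ t ∈ Icc p (T + p), (1 - β₁) / √(1 - β₂) * (G / (1 - ρ)) :=
        sum_le_sum fun t _ => sq_expMovingAvg_div_sqrt_le hβ₁₀ hβ₁₁ hβ₂₀ hβ₂₁ hρ ha (hw t)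
    _ = (1 - β₁) / √(1 - β₂) * (T * G / (1 - ρ) + G / (1 - ρ)) := by
        rw [sum_const, Nat.card_Icc, show T + p + 1 - p = T + 1 by omega, nsmul_eq_mul]
        push_cast
        ring
    _ ≤ (1 - β₁) / √(1 - β₂) * (T * G / (1 - ρ) + G / (1 - ρ) ^ 2) := by
        gcongr

/-- Lemma 1 of the paper.  For the convgAdam moment sequences
`m_t = (1−β₁) Σ_{i=1}^t β₁^{t−i} g_i` and `v_t = (1−β₂) Σ_{i=1}^t β₂^{t−i} g_i ⊙ g_i`
with bounded gradients `‖g_i‖∞ ≤ G∞`, `λ = β₁/√β₂ < 1`, and any `v̂_t ≥ v_t`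
coordinatewise, the normalized moment energy over any window `[p, T+p]` satisfies
`Σ_t Σ_j m_{t,j}²/√(v̂_{t,j}) ≤ (d(1−β₁)/√(1−β₂))·(T·G∞/(1−λ) + G∞/(1−λ)²)`,
i.e. it is `O(T)` uniformly in `p`.  (Coordinates with `v̂_{t,j} = 0` contribute `0`;
in Lean division by zero is zero, matching this convention.) -/
theorem convgAdam_moment_energy_window
    (d : ℕ) (β₁ β₂ Ginf : ℝ)
    (hβ₁ : 0 < β₁) (hβ₁' : β₁ < 1) (hβ₂ : 0 < β₂) (hβ₂' : β₂ < 1)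
    (hlam : β₁ / Real.sqrt β₂ < 1)
    (g : ℕ → Fin d → ℝ) (hg : ∀ i, 1 ≤ i → ∀ j, |g i j| ≤ Ginf)
    (m v : ℕ → Fin d → ℝ)
    (hm : ∀ t j, m t j = (1 - β₁) * ∑ i ∈ Finset.Icc 1 t, β₁ ^ (t - i) * g i j)
    (hv : ∀ t j, v t j = (1 - β₂) * ∑ i ∈ Finset.Icc 1 t, β₂ ^ (t - i) * (g i j) ^ 2)
    (vhat : ℕ → Fin d → ℝ) (hvhat : ∀ t j, v t j ≤ vhat t j) :
    ∀ p : ℕ, 1 ≤ p → ∀ T : ℕ,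
      ∑ t ∈ Finset.Icc p (T + p), ∑ j, (m t j) ^ 2 / Real.sqrt (vhat t j)
        ≤ ((d : ℝ) * (1 - β₁) / Real.sqrt (1 - β₂)) *
            ((T : ℝ) * Ginf / (1 - β₁ / Real.sqrt β₂)
              + Ginf / (1 - β₁ / Real.sqrt β₂) ^ 2) := by
  intro p _ T
  have hm' : ∀ t j, m t j = expMovingAvg β₁ (fun i => g i j) t := hm
  calc ∑ t ∈ Icc p (T + p), ∑ j, m t j ^ 2 / √(vhat t j)
      = ∑ j, ∑ t ∈ Icc p (T + p), expMovingAvg β₁ (fun i => g i j) t ^ 2 / √(vhat t j) := by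
        simp only [hm']; exact sum_comm
    _ ≤ ∑ _j : Fin d, (1 - β₁) / √(1 - β₂) *
          (T * Ginf / (1 - β₁ / √β₂) + Ginf / (1 - β₁ / √β₂) ^ 2) :=
        sum_le_sum fun j _ => sum_Icc_sq_expMovingAvg_div_sqrt_le hβ₁.le hβ₁' hβ₂ hβ₂' hlam
          (fun i hi => hg i hi j) (fun t => (hv t j).ge.trans (hvhat t j)) p T
    _ = _ := by
        rw [sum_const, card_univ, Fintype.card_fin, nsmul_eq_mul]
        ring
end

section
/- Let (v̂_t)_{t≥p} be a sequence in ℝ^d that is coordinatewise nondecreasing (v̂_{t,j} ≥ v̂_{t−1,j} ≥ 0 for all t > p and all j) and satisfies v̂_{t,j} ≤ G∞² for all t, j. Let (ω_t)_{t≥p} ⊂ ℝ^d and ω* ∈ ℝ^d satisfy ‖ω_t − ω*‖∞ ≤ D∞ for all t. Then Σ_{t=p}^{T+p} ( ‖⁴√v̂_t ⊙ (ω_t − ω*)‖² − ‖⁴√v̂_t ⊙ (ω_{t+1} − ω*)‖² ) ≤ d·D∞²·G∞. -/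
open Finset

lemma convgAdam_aux (p : ℕ) (f w : ℕ → ℝ) (D : ℝ)
    (hf0 : ∀ t, p ≤ t → 0 ≤ f t)
    (hfmono : ∀ t, p ≤ t → f t ≤ f (t + 1))
    (hwD : ∀ t, p ≤ t → w t ≤ D ^ 2) :
    ∀ T : ℕ, ∑ t ∈ Finset.Icc p (T + p), f t * (w t - w (t + 1))
      ≤ f (T + p) * D ^ 2 - f (T + p) * w (T + p + 1) := by
  intro T
  induction T with
  | zero =>
      simp only [Nat.zero_add, Finset.Icc_self, Finset.sum_singleton]
      have := hwD p le_rfl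
      nlinarith [hwD p le_rfl, hf0 p le_rfl]
  | succ T ih =>
      have h1 : p ≤ T + p + 1 := by omega
      have hsum : ∑ t ∈ Finset.Icc p (T + 1 + p), f t * (w t - w (t + 1))
          = (∑ t ∈ Finset.Icc p (T + p), f t * (w t - w (t + 1)))
            + f (T + p + 1) * (w (T + p + 1) - w (T + p + 2)) := by
        have : T + 1 + p = (T + p) + 1 := by omega
        rw [this, Finset.sum_Icc_succ_top (by omega : p ≤ T + p + 1)]
      rw [hsum]
      have hmono := hfmono (T + p) (by omega)
      have hwb := hwD (T + p + 1) (by omega)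
      have h2 : T + 1 + p = T + p + 1 := by omega
      rw [h2]
      nlinarith [ih, hmono, hwb, hf0 (T + p) (by omega), hf0 (T + p + 1) (by omega)]

/-- the telescoping bound in the regret decomposition of convgAdam.
If `v̂_t ∈ ℝ^d` is coordinatewise nondecreasing and nonnegative on the window, with
entries at most `G∞²`, and `‖ω_t − ω*‖∞ ≤ D∞`, then
`Σ_{t=p}^{T+p} ( ‖⁴√v̂_t ⊙ (ω_t − ω*)‖² − ‖⁴√v̂_t ⊙ (ω_{t+1} − ω*)‖² ) ≤ d·D∞²·G∞`,
where the fourth root `⁴√x = √(√x)` and the Hadamard product are coordinatewise,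
and `‖·‖` is the Euclidean norm. -/
theorem convgAdam_telescoping_bound
    (d p T : ℕ) (Ginf Dinf : ℝ) (hGinf : 0 ≤ Ginf)
    (vhat : ℕ → Fin d → ℝ)
    (hmono : ∀ t, p < t → ∀ j, vhat (t - 1) j ≤ vhat t j)
    (hnonneg : ∀ t, p ≤ t → ∀ j, 0 ≤ vhat t j)
    (hub : ∀ t j, vhat t j ≤ Ginf ^ 2)
    (ω : ℕ → Fin d → ℝ) (ωstar : Fin d → ℝ)
    (hω : ∀ t, p ≤ t → ∀ j, |ω t j - ωstar j| ≤ Dinf) :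
    ∑ t ∈ Finset.Icc p (T + p),
        ((∑ j, (Real.sqrt (Real.sqrt (vhat t j)) * (ω t j - ωstar j)) ^ 2)
          - ∑ j, (Real.sqrt (Real.sqrt (vhat t j)) * (ω (t + 1) j - ωstar j)) ^ 2)
      ≤ (d : ℝ) * Dinf ^ 2 * Ginf := by
  -- rewrite each summand coordinatewise
  have key : ∀ t ∈ Finset.Icc p (T + p),
      ((∑ j, (Real.sqrt (Real.sqrt (vhat t j)) * (ω t j - ωstar j)) ^ 2)
          - ∑ j, (Real.sqrt (Real.sqrt (vhat t j)) * (ω (t + 1) j - ωstar j)) ^ 2)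
      = ∑ j, Real.sqrt (vhat t j) *
          ((ω t j - ωstar j) ^ 2 - (ω (t + 1) j - ωstar j) ^ 2) := by
    intro t ht
    rw [← Finset.sum_sub_distrib]
    refine Finset.sum_congr rfl fun j _ => ?_
    have h4 : Real.sqrt (Real.sqrt (vhat t j)) ^ 2 = Real.sqrt (vhat t j) :=
      Real.sq_sqrt (Real.sqrt_nonneg _)
    rw [mul_pow, mul_pow, h4]
    ring
  rw [Finset.sum_congr rfl key, Finset.sum_comm]
  have hstep : ∀ j : Fin d,
      ∑ t ∈ Finset.Icc p (T + p), Real.sqrt (vhat t j) *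
          ((ω t j - ωstar j) ^ 2 - (ω (t + 1) j - ωstar j) ^ 2)
        ≤ Dinf ^ 2 * Ginf := by
    intro j
    have hfmono : ∀ t, p ≤ t → Real.sqrt (vhat t j) ≤ Real.sqrt (vhat (t + 1) j) := by
      intro t ht
      apply Real.sqrt_le_sqrt
      have := hmono (t + 1) (by omega) j
      simpa using this
    have hwD : ∀ t, p ≤ t → (ω t j - ωstar j) ^ 2 ≤ Dinf ^ 2 := by
      intro t ht
      have := hω t ht j
      nlinarith [abs_nonneg (ω t j - ωstar j), sq_abs (ω t j - ωstar j)]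
    have h := convgAdam_aux p (fun t => Real.sqrt (vhat t j))
      (fun t => (ω t j - ωstar j) ^ 2) Dinf (fun t _ => Real.sqrt_nonneg _) hfmono hwD T
    have hG : Real.sqrt (vhat (T + p) j) ≤ Ginf := by
      calc Real.sqrt (vhat (T + p) j) ≤ Real.sqrt (Ginf ^ 2) :=
            Real.sqrt_le_sqrt (hub _ j)
        _ = Ginf := by rw [Real.sqrt_sq hGinf]
    have hf0 : 0 ≤ Real.sqrt (vhat (T + p) j) := Real.sqrt_nonneg _
    have hw0 : 0 ≤ (ω (T + p + 1) j - ωstar j) ^ 2 := sq_nonneg _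
    have hD0 : 0 ≤ Dinf ^ 2 := sq_nonneg _
    calc ∑ t ∈ Finset.Icc p (T + p), Real.sqrt (vhat t j) *
          ((ω t j - ωstar j) ^ 2 - (ω (t + 1) j - ωstar j) ^ 2)
        ≤ Real.sqrt (vhat (T + p) j) * Dinf ^ 2
            - Real.sqrt (vhat (T + p) j) * (ω (T + p + 1) j - ωstar j) ^ 2 := h
      _ ≤ Real.sqrt (vhat (T + p) j) * Dinf ^ 2 := by nlinarith
      _ ≤ Dinf ^ 2 * Ginf := by nlinarith
  calc ∑ j, ∑ t ∈ Finset.Icc p (T + p), Real.sqrt (vhat t j) *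
          ((ω t j - ωstar j) ^ 2 - (ω (t + 1) j - ωstar j) ^ 2)
      ≤ ∑ _j : Fin d, Dinf ^ 2 * Ginf := Finset.sum_le_sum fun j _ => hstep j
    _ = (d : ℝ) * Dinf ^ 2 * Ginf := by simp [mul_assoc]
end

section
/- Let 0 < ρ ≤ 1 and let B₁, B₂ be independent {0,1}-valued random variables with P(B₁ = 1) = P(B₂ = 1) = ρ. Let ω₁, ω₁* ∈ ℝⁿ, ω₂, ω₂* ∈ ℝ^{n×d}, z ∈ ℝ^d, and set y = ρ·ω₁*ᵀω₂*z. Define the stochastic gradients g₁ = (ω₁ᵀ(B₁ ω₂ z) − y)·(B₂ ω₂ z) ∈ ℝⁿ and g₂ = (ω₁ᵀ(B₁ ω₂ z) − y)·ω₁ (B₂ z)ᵀ ∈ ℝ^{n×d}. Then E[g₁] = ρ² (ω₁ᵀω₂z − ω₁*ᵀω₂*z) ω₂ z and E[g₂] = ρ² (ω₁ᵀω₂z − ω₁*ᵀω₂*z) ω₁ zᵀ. -/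
open Matrix MeasureTheory ProbabilityTheory

/-! Each gradient entry is `(B₁ a - y) * (B₂ c)` for constants `a = ω₁ᵀω₂z` and `c`. Expanding,
independence gives `E[B₁B₂] = ρ²` and `E[B₂] = ρ`, so the expectation is `(ρ² a - ρ y) c`, which
is `ρ² (a - ω₁*ᵀω₂*z) c` for the realizable label `y = ρ ω₁*ᵀω₂*z`. -/

lemma eq_indicator_one_of_zero_or_one {Ω : Type*} {B : Ω → ℝ} (hB : ∀ x, B x = 0 ∨ B x = 1) :
    B = {x | B x = 1}.indicator 1 := by
  ext x
  rcases hB x with h | h <;> simp [h]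

section RealRandomVariables

variable {Ω : Type*} [MeasurableSpace Ω] {μ : Measure Ω} {B : Ω → ℝ}

lemma integrable_of_zero_or_one [IsFiniteMeasure μ] (hBm : Measurable B)
    (hB : ∀ x, B x = 0 ∨ B x = 1) : Integrable B μ := by
  refine .of_bound hBm.aestronglyMeasurable 1 (.of_forall fun x => ?_)
  rcases hB x with h | h <;> simp [h]

lemma integral_eq_of_zero_or_one {p : ℝ} (hp : 0 ≤ p) (hBm : Measurable B)
    (hB : ∀ x, B x = 0 ∨ B x = 1) (hμ : μ {x | B x = 1} = ENNReal.ofReal p) :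
    ∫ x, B x ∂μ = p := by
  rw [eq_indicator_one_of_zero_or_one hB,
    integral_indicator_one (s := {x | B x = 1}) (hBm (measurableSet_singleton 1)),
    measureReal_def, hμ, ENNReal.toReal_ofReal hp]

lemma ProbabilityTheory.IndepFun.integral_affine_mul_linear [IsProbabilityMeasure μ]
    {B₁ B₂ : Ω → ℝ} (hind : IndepFun B₁ B₂ μ)
    (h₁ : Integrable B₁ μ) (h₂ : Integrable B₂ μ) (a y c : ℝ) :
    ∫ x, (B₁ x * a - y) * (B₂ x * c) ∂μ
      = ((∫ x, B₁ x ∂μ) * a - y) * ((∫ x, B₂ x ∂μ) * c) := by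
  have h₁₂ : Integrable (fun x => B₁ x * B₂ x) μ := hind.integrable_mul h₁ h₂
  calc ∫ x, (B₁ x * a - y) * (B₂ x * c) ∂μ
      = (a * c) * ∫ x, B₁ x * B₂ x ∂μ - (y * c) * ∫ x, B₂ x ∂μ := by
        rw [← integral_const_mul, ← integral_const_mul,
          ← integral_sub (h₁₂.const_mul _) (h₂.const_mul _)]
        congr 1 with x
        ring
    _ = _ := by
        rw [hind.integral_fun_mul_eq_mul_integral h₁.aestronglyMeasurable h₂.aestronglyMeasurable]
        ring

end RealRandomVariables

theorem relu_expected_gradients_general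
    (n d : ℕ) (ρ : ℝ) (hρ0 : 0 < ρ)
    {Ω : Type} [MeasurableSpace Ω] (μ : Measure Ω) [IsProbabilityMeasure μ]
    (B₁ B₂ : Ω → ℝ)
    (hB₁meas : Measurable B₁) (hB₂meas : Measurable B₂)
    (hB₁01 : ∀ x, B₁ x = 0 ∨ B₁ x = 1) (hB₂01 : ∀ x, B₂ x = 0 ∨ B₂ x = 1)
    (hB₁p : μ {x | B₁ x = 1} = ENNReal.ofReal ρ)
    (hB₂p : μ {x | B₂ x = 1} = ENNReal.ofReal ρ)
    (hindep : IndepFun B₁ B₂ μ)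
    (ω₁ ω₁s : Fin n → ℝ) (ω₂ ω₂s : Matrix (Fin n) (Fin d) ℝ) (z : Fin d → ℝ)
    (y : ℝ) (hy : y = ρ * (ω₁s ⬝ᵥ (ω₂s *ᵥ z))) :
    (∀ i, ∫ x, (ω₁ ⬝ᵥ (B₁ x • (ω₂ *ᵥ z)) - y) * (B₂ x • (ω₂ *ᵥ z)) i ∂μ
        = ρ ^ 2 * (ω₁ ⬝ᵥ (ω₂ *ᵥ z) - ω₁s ⬝ᵥ (ω₂s *ᵥ z)) * (ω₂ *ᵥ z) i)
    ∧ (∀ i j, ∫ x, (ω₁ ⬝ᵥ (B₁ x • (ω₂ *ᵥ z)) - y) * (ω₁ i * (B₂ x * z j)) ∂μ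
        = ρ ^ 2 * (ω₁ ⬝ᵥ (ω₂ *ᵥ z) - ω₁s ⬝ᵥ (ω₂s *ᵥ z)) * (ω₁ i * z j)) := by
  have hexpect : ∀ c, ∫ x, (B₁ x * (ω₁ ⬝ᵥ (ω₂ *ᵥ z)) - y) * (B₂ x * c) ∂μ
      = ρ ^ 2 * (ω₁ ⬝ᵥ (ω₂ *ᵥ z) - ω₁s ⬝ᵥ (ω₂s *ᵥ z)) * c := fun c => by
    rw [hindep.integral_affine_mul_linear (integrable_of_zero_or_one hB₁meas hB₁01)
      (integrable_of_zero_or_one hB₂meas hB₂01),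
      integral_eq_of_zero_or_one hρ0.le hB₁meas hB₁01 hB₁p,
      integral_eq_of_zero_or_one hρ0.le hB₂meas hB₂01 hB₂p, hy]
    ring
  refine ⟨fun i => ?_, fun i j => ?_⟩
  · simpa only [dotProduct_smul, smul_eq_mul, Pi.smul_apply] using hexpect ((ω₂ *ᵥ z) i)
  · rw [← hexpect (ω₁ i * z j)]
    congr 1 with x
    rw [dotProduct_smul, smul_eq_mul]
    ring

/-- Lemma 3 of the paper (unbiasedness of the stochastic gradients).
With independent Bernoulli(ρ) activations `B₁, B₂` and realizable labels
`y = ρ ω₁*ᵀω₂*z`, the stochastic gradients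
`g₁ = (ω₁ᵀ(B₁ω₂z) − y)·(B₂ω₂z)` and `g₂ = (ω₁ᵀ(B₁ω₂z) − y)·ω₁(B₂z)ᵀ` satisfy
`E[g₁] = ρ²(ω₁ᵀω₂z − ω₁*ᵀω₂*z) ω₂z` and `E[g₂] = ρ²(ω₁ᵀω₂z − ω₁*ᵀω₂*z) ω₁zᵀ`
(stated componentwise). -/
theorem relu_expected_gradients
    (n d : ℕ) (ρ : ℝ) (hρ0 : 0 < ρ) (hρ1 : ρ ≤ 1)
    {Ω : Type} [MeasurableSpace Ω] (μ : Measure Ω) [IsProbabilityMeasure μ]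
    (B₁ B₂ : Ω → ℝ)
    (hB₁meas : Measurable B₁) (hB₂meas : Measurable B₂)
    (hB₁01 : ∀ x, B₁ x = 0 ∨ B₁ x = 1) (hB₂01 : ∀ x, B₂ x = 0 ∨ B₂ x = 1)
    (hB₁p : μ {x | B₁ x = 1} = ENNReal.ofReal ρ)
    (hB₂p : μ {x | B₂ x = 1} = ENNReal.ofReal ρ)
    (hindep : IndepFun B₁ B₂ μ)
    (ω₁ ω₁s : Fin n → ℝ) (ω₂ ω₂s : Matrix (Fin n) (Fin d) ℝ) (z : Fin d → ℝ)
    (y : ℝ) (hy : y = ρ * (ω₁s ⬝ᵥ (ω₂s *ᵥ z))) :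
    (∀ i, ∫ x, (ω₁ ⬝ᵥ (B₁ x • (ω₂ *ᵥ z)) - y) * (B₂ x • (ω₂ *ᵥ z)) i ∂μ
        = ρ ^ 2 * (ω₁ ⬝ᵥ (ω₂ *ᵥ z) - ω₁s ⬝ᵥ (ω₂s *ᵥ z)) * (ω₂ *ᵥ z) i)
    ∧ (∀ i j, ∫ x, (ω₁ ⬝ᵥ (B₁ x • (ω₂ *ᵥ z)) - y) * (ω₁ i * (B₂ x * z j)) ∂μ
        = ρ ^ 2 * (ω₁ ⬝ᵥ (ω₂ *ᵥ z) - ω₁s ⬝ᵥ (ω₂s *ᵥ z)) * (ω₁ i * z j)) :=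
  relu_expected_gradients_general n d ρ hρ0 μ B₁ B₂ hB₁meas hB₂meas hB₁01 hB₂01 hB₁p hB₂p hindep ω₁
    ω₁s ω₂ ω₂s z y hy
end

section
/- Let ω₁, ω₁* ∈ ℝⁿ, ω₂, ω₂* ∈ ℝ^{n×d}, z ∈ ℝ^d, ρ ∈ ℝ, and constants α > 0 and 0 < ε < π/2. Assume the operator norm of ω₂ᵀω₂ is at most α, and assume the angle condition: either (ω₁ᵀω₂ − ω₁*ᵀω₂*) z = 0, or |⟨ ω₂ᵀω₁ − ω₂*ᵀω₁* , z ⟩| ≥ cos(ε)·‖ω₂ᵀω₁ − ω₂*ᵀω₁*‖·‖z‖. Then | ⟨ ω₂ᵀω₁ − ω₂*ᵀω₁* , ω₂ᵀ ( ρ² (ω₁ᵀω₂z − ω₁*ᵀω₂*z) ω₂ z ) ⟩ | ≤ ρ² (ω₁ᵀω₂z − ω₁*ᵀω₂*z)² · α/cos(ε). -/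
open Matrix

lemma cs_aux {d : ℕ} (v w : Fin d → ℝ) :
    |v ⬝ᵥ w| ≤ Real.sqrt (∑ j, (v j) ^ 2) * Real.sqrt (∑ j, (w j) ^ 2) := by
  rw [← Real.sqrt_mul (by positivity), ← Real.sqrt_sq_eq_abs]
  exact Real.sqrt_le_sqrt (Finset.sum_mul_sq_le_sq_mul_sq _ v w)

/-- the bound on the first-layer cross term in the dnnGd analysis.
If the operator norm of `ω₂ᵀω₂` is at most `α` (expressed as
`‖ω₂ᵀω₂ x‖ ≤ α‖x‖` for all `x`, with Euclidean norms spelled via `√(Σ ·²)`) and the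
angle condition holds (the weight error is not nearly orthogonal to `z`), then
`|⟨ω₂ᵀω₁ − ω₂*ᵀω₁*, ω₂ᵀ(ρ²(ω₁ᵀω₂z − ω₁*ᵀω₂*z) ω₂z)⟩|
  ≤ ρ²(ω₁ᵀω₂z − ω₁*ᵀω₂*z)² · α/cos ε`. -/
theorem first_layer_gradient_bound
    (n d : ℕ) (ρ α ε : ℝ) (hα : 0 < α) (hε0 : 0 < ε) (hε1 : ε < Real.pi / 2)
    (ω₁ ω₁s : Fin n → ℝ) (ω₂ ω₂s : Matrix (Fin n) (Fin d) ℝ) (z : Fin d → ℝ)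
    (hop : ∀ x : Fin d → ℝ,
      Real.sqrt (∑ j, (((ω₂ᵀ * ω₂) *ᵥ x) j) ^ 2) ≤ α * Real.sqrt (∑ j, (x j) ^ 2))
    (hangle : (ω₁ ⬝ᵥ (ω₂ *ᵥ z) - ω₁s ⬝ᵥ (ω₂s *ᵥ z) = 0) ∨
      Real.cos ε * Real.sqrt (∑ j, ((ω₂ᵀ *ᵥ ω₁ - ω₂sᵀ *ᵥ ω₁s) j) ^ 2)
          * Real.sqrt (∑ j, (z j) ^ 2)
        ≤ |(ω₂ᵀ *ᵥ ω₁ - ω₂sᵀ *ᵥ ω₁s) ⬝ᵥ z|) :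
    |(ω₂ᵀ *ᵥ ω₁ - ω₂sᵀ *ᵥ ω₁s) ⬝ᵥ
        (ω₂ᵀ *ᵥ ((ρ ^ 2 * (ω₁ ⬝ᵥ (ω₂ *ᵥ z) - ω₁s ⬝ᵥ (ω₂s *ᵥ z))) • (ω₂ *ᵥ z)))|
      ≤ ρ ^ 2 * (ω₁ ⬝ᵥ (ω₂ *ᵥ z) - ω₁s ⬝ᵥ (ω₂s *ᵥ z)) ^ 2 * (α / Real.cos ε) := by
  have hcos : 0 < Real.cos ε :=
    Real.cos_pos_of_mem_Ioo ⟨by linarith [Real.pi_pos], hε1⟩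
  set v : Fin d → ℝ := ω₂ᵀ *ᵥ ω₁ - ω₂sᵀ *ᵥ ω₁s with hv
  set c : ℝ := ω₁ ⬝ᵥ (ω₂ *ᵥ z) - ω₁s ⬝ᵥ (ω₂s *ᵥ z) with hc
  have hvz : v ⬝ᵥ z = c := by
    simp [hv, hc, sub_dotProduct, Matrix.mulVec_transpose,
      Matrix.dotProduct_mulVec]
  have hlhs : v ⬝ᵥ (ω₂ᵀ *ᵥ ((ρ ^ 2 * c) • (ω₂ *ᵥ z)))
      = (ρ ^ 2 * c) * (v ⬝ᵥ ((ω₂ᵀ * ω₂) *ᵥ z)) := by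
    rw [Matrix.mulVec_smul, dotProduct_smul, ← Matrix.mulVec_mulVec]
    simp [smul_eq_mul]
  rw [hlhs, abs_mul]
  set w : Fin d → ℝ := (ω₂ᵀ * ω₂) *ᵥ z with hw
  have hcs : |v ⬝ᵥ w| ≤ Real.sqrt (∑ j, (v j) ^ 2) * Real.sqrt (∑ j, (w j) ^ 2) :=
    cs_aux v w
  rcases hangle with h0 | hang
  · rw [show ρ ^ 2 * c = ρ ^ 2 * 0 by rw [← h0]]
    simp
    positivity
  · rw [hvz] at hang
    have hbound : |v ⬝ᵥ w| ≤ (Real.sqrt (∑ j, (v j) ^ 2) * Real.sqrt (∑ j, (z j) ^ 2)) * α := by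
      calc |v ⬝ᵥ w| ≤ Real.sqrt (∑ j, (v j) ^ 2) * Real.sqrt (∑ j, (w j) ^ 2) := hcs
        _ ≤ Real.sqrt (∑ j, (v j) ^ 2) * (α * Real.sqrt (∑ j, (z j) ^ 2)) :=
            mul_le_mul_of_nonneg_left (hop z) (Real.sqrt_nonneg _)
        _ = _ := by ring
    have hvz' : Real.sqrt (∑ j, (v j) ^ 2) * Real.sqrt (∑ j, (z j) ^ 2) ≤ |c| / Real.cos ε := by
      rw [le_div_iff₀ hcos]
      linarith [hang]
    have hbound2 : |v ⬝ᵥ w| ≤ |c| / Real.cos ε * α := by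
      calc |v ⬝ᵥ w| ≤ _ * α := hbound
        _ ≤ |c| / Real.cos ε * α := mul_le_mul_of_nonneg_right hvz' hα.le
    calc |ρ ^ 2 * c| * |v ⬝ᵥ w| ≤ |ρ ^ 2 * c| * (|c| / Real.cos ε * α) :=
          mul_le_mul_of_nonneg_left hbound2 (abs_nonneg _)
      _ = ρ ^ 2 * c ^ 2 * (α / Real.cos ε) := by
          have habs : |c| * |c| = c ^ 2 := by
            rw [← abs_mul, abs_mul_self, sq]
          rw [abs_mul, abs_of_nonneg (sq_nonneg ρ), ← habs]
          ring
end

section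
/- Let 0 < β₁₁₁ < 1, 0 < β₂₁ < 1 with λ₁ := β₁₁₁/β₂₁ < 1, and let (β_{11j})_{j≥1} satisfy 0 ≤ β_{11j} ≤ β₁₁₁ for all j. Let g_{1,1}, …, g_{1,t} ∈ ℝⁿ, define m_{1,t} = β_{11t} m_{1,t−1} + (1−β_{11t}) g_{1,t} with m_{1,0} = 0, and let v̂_{1,t} ∈ ℝⁿ satisfy, coordinatewise, v̂_{1,t} ≥ (1−β₂₁) Σ_{j=1}^t β₂₁^{t−j} g_{1,j} ⊙ g_{1,j}. Then ‖(1/√v̂_{1,t}) ⊙ m_{1,t}‖² ≤ n / ( (1−β₁₁₁)(1−β₂₁)(1−λ₁) ), where coordinates with v̂_{1,t} = 0 are interpreted as 0. -/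
/-!
Each step of the first-moment recursion is a convex combination, so by convexity of `x ↦ x²`,
`m_{t+1}² ≤ β_{t+1} m_t² + (1 - β_{t+1}) g_{t+1}²`. Since `β_j ≤ β₁₁₁ < β₂₁`, induction gives
`m_t² ≤ Σ_j β₂₁^{t-j} g_j² ≤ v̂_t / (1 - β₂₁)` coordinatewise, and `1 / (1 - β₂₁)` is below the
claimed constant.
-/

open Finset

lemma sum_Icc_one_pow_sub_mul_succ (ρ : ℝ) (f : ℕ → ℝ) (t : ℕ) :
    ∑ j ∈ Icc 1 (t + 1), ρ ^ (t + 1 - j) * f j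
      = ρ * ∑ j ∈ Icc 1 t, ρ ^ (t - j) * f j + f (t + 1) := by
  rw [sum_Icc_succ_top (by omega), Nat.sub_self, pow_zero, one_mul, mul_sum]
  congr 1
  refine sum_congr rfl fun j hj => ?_
  rw [Nat.sub_add_comm (mem_Icc.mp hj).2, pow_succ]
  ring

lemma sq_le_sum_pow_sub_mul_sq_of_recursion {b g m : ℕ → ℝ} {ρ : ℝ}
    (hb0 : ∀ j, 0 ≤ b j) (hbρ : ∀ j, b j ≤ ρ) (hρ : ρ ≤ 1) (hm0 : m 0 = 0)
    (hm : ∀ j, m (j + 1) = b (j + 1) * m j + (1 - b (j + 1)) * g (j + 1)) (t : ℕ) :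
    m t ^ 2 ≤ ∑ j ∈ Icc 1 t, ρ ^ (t - j) * g j ^ 2 := by
  induction t with
  | zero => simp [hm0]
  | succ t ih =>
    have hb := hb0 (t + 1)
    have hb1 : b (t + 1) ≤ 1 := (hbρ _).trans hρ
    have hS : 0 ≤ ∑ j ∈ Icc 1 t, ρ ^ (t - j) * g j ^ 2 :=
      sum_nonneg fun j _ => mul_nonneg (pow_nonneg (hb.trans (hbρ _)) _) (sq_nonneg _)
    have convex : m (t + 1) ^ 2 ≤ b (t + 1) * m t ^ 2 + (1 - b (t + 1)) * g (t + 1) ^ 2 := by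
      rw [hm]
      nlinarith [mul_nonneg hb (sub_nonneg.mpr hb1), sq_nonneg (m t - g (t + 1))]
    rw [sum_Icc_one_pow_sub_mul_succ]
    nlinarith [hbρ (t + 1), sq_nonneg (g (t + 1))]

lemma div_sqrt_sq_le {x v C : ℝ} (hC : 0 ≤ C) (h : x ^ 2 ≤ C * v) : (x / √v) ^ 2 ≤ C := by
  rcases le_or_gt v 0 with hv | hv
  · simpa [Real.sqrt_eq_zero'.mpr hv] using hC
  · rw [div_pow, Real.sq_sqrt hv.le, div_le_iff₀ hv]
    exact h

theorem dnnAdam_first_moment_normalized_bound_general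
    (n t : ℕ)
    (β₁₁₁ β₂₁ : ℝ) (hβ₂ : 0 < β₂₁) (hβ₂' : β₂₁ < 1)
    (hlam : β₁₁₁ / β₂₁ < 1)
    (β : ℕ → ℝ) (hβ0 : ∀ j, 0 ≤ β j) (hβub : ∀ j, β j ≤ β₁₁₁)
    (g : ℕ → Fin n → ℝ)
    (m : ℕ → Fin n → ℝ) (hm0 : ∀ i, m 0 i = 0)
    (hm : ∀ j i, m (j + 1) i = β (j + 1) * m j i + (1 - β (j + 1)) * g (j + 1) i)
    (vhat : Fin n → ℝ)
    (hvhat : ∀ i, (1 - β₂₁) * ∑ j ∈ Finset.Icc 1 t, β₂₁ ^ (t - j) * (g j i) ^ 2 ≤ vhat i) :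
    ∑ i, (m t i / Real.sqrt (vhat i)) ^ 2
      ≤ (n : ℝ) / ((1 - β₁₁₁) * (1 - β₂₁) * (1 - β₁₁₁ / β₂₁)) := by
  have hβ₁₂ : β₁₁₁ < β₂₁ := (div_lt_one hβ₂).mp hlam
  have hβ₁ : 0 ≤ β₁₁₁ := (hβ0 0).trans (hβub 0)
  have hlam0 : 0 ≤ β₁₁₁ / β₂₁ := div_nonneg hβ₁ hβ₂.le
  have hcoord : ∀ i, (m t i / √(vhat i)) ^ 2 ≤ 1 / (1 - β₂₁) := fun i => by
    refine div_sqrt_sq_le (by bound) ?_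
    have hsq := sq_le_sum_pow_sub_mul_sq_of_recursion (g := (g · i)) (m := (m · i)) hβ0
      (fun j => (hβub j).trans hβ₁₂.le) hβ₂'.le (hm0 i) (fun j => hm j i) t
    rw [one_div_mul_eq_div, le_div_iff₀ (by linarith)]
    calc m t i ^ 2 * (1 - β₂₁) ≤ (∑ j ∈ Icc 1 t, β₂₁ ^ (t - j) * g j i ^ 2) * (1 - β₂₁) :=
          mul_le_mul_of_nonneg_right hsq (by linarith)
      _ ≤ vhat i := (mul_comm _ _).trans_le (hvhat i)
  have hconst : 1 / (1 - β₂₁) ≤ 1 / ((1 - β₁₁₁) * (1 - β₂₁) * (1 - β₁₁₁ / β₂₁)) := by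
    refine one_div_le_one_div_of_le (by bound) ?_
    nlinarith [mul_nonneg hβ₁ (sub_nonneg.mpr hβ₂'.le), mul_nonneg hlam0 (sub_nonneg.mpr hβ₂'.le),
      mul_nonneg (mul_nonneg hβ₁ hlam0) (sub_nonneg.mpr hβ₂'.le)]
  calc ∑ i, (m t i / √(vhat i)) ^ 2
        ≤ ∑ _i : Fin n, 1 / ((1 - β₁₁₁) * (1 - β₂₁) * (1 - β₁₁₁ / β₂₁)) :=
      sum_le_sum fun i _ => (hcoord i).trans hconst
    _ = (n : ℝ) / ((1 - β₁₁₁) * (1 - β₂₁) * (1 - β₁₁₁ / β₂₁)) := by simp [div_eq_mul_inv]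

/-- Lemma 5, bound (2) of the paper.  With time-varying decay
parameters `0 ≤ β_{11j} ≤ β₁₁₁`, the first-moment recursion
`m_{1,t} = β_{11t} m_{1,t−1} + (1−β_{11t}) g_{1,t}` (started at `0`), and any
`v̂_{1,t}` dominating coordinatewise the exponential moving average
`(1−β₂₁) Σ_{j=1}^t β₂₁^{t−j} g_{1,j} ⊙ g_{1,j}`, if `λ₁ = β₁₁₁/β₂₁ < 1` then
`‖(1/√v̂_{1,t}) ⊙ m_{1,t}‖² ≤ n/((1−β₁₁₁)(1−β₂₁)(1−λ₁))`.
(Coordinates with `v̂_{1,t} = 0` contribute `0`; Lean's division by zero is zero.) -/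
theorem dnnAdam_first_moment_normalized_bound
    (n t : ℕ)
    (β₁₁₁ β₂₁ : ℝ) (hβ₁ : 0 < β₁₁₁) (hβ₁' : β₁₁₁ < 1) (hβ₂ : 0 < β₂₁) (hβ₂' : β₂₁ < 1)
    (hlam : β₁₁₁ / β₂₁ < 1)
    (β : ℕ → ℝ) (hβ0 : ∀ j, 0 ≤ β j) (hβub : ∀ j, β j ≤ β₁₁₁)
    (g : ℕ → Fin n → ℝ)
    (m : ℕ → Fin n → ℝ) (hm0 : ∀ i, m 0 i = 0)
    (hm : ∀ j i, m (j + 1) i = β (j + 1) * m j i + (1 - β (j + 1)) * g (j + 1) i)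
    (vhat : Fin n → ℝ)
    (hvhat : ∀ i, (1 - β₂₁) * ∑ j ∈ Finset.Icc 1 t, β₂₁ ^ (t - j) * (g j i) ^ 2 ≤ vhat i) :
    ∑ i, (m t i / Real.sqrt (vhat i)) ^ 2
      ≤ (n : ℝ) / ((1 - β₁₁₁) * (1 - β₂₁) * (1 - β₁₁₁ / β₂₁)) :=
  dnnAdam_first_moment_normalized_bound_general n t β₁₁₁ β₂₁ hβ₂ hβ₂' hlam β hβ0 hβub g m hm0 hm
    vhat hvhat
end

section
/- Let 0 < β₁₁₁ < 1, 0 < β₂₁ < 1 with λ₁ := β₁₁₁/β₂₁ < 1, and let (β_{11j})_{j≥1} satisfy 0 ≤ β_{11j} ≤ β₁₁₁ for all j. Let g_{1,1}, …, g_{1,t} ∈ ℝⁿ, define m_{1,t} = β_{11t} m_{1,t−1} + (1−β_{11t}) g_{1,t} with m_{1,0} = 0, and let (v̂_{1,s})_s ⊂ ℝⁿ be coordinatewise nondecreasing with v̂_{1,s} ≥ (1−β₂₁) Σ_{j=1}^s β₂₁^{s−j} g_{1,j} ⊙ g_{1,j} coordinatewise for each s. Then ‖(1/√v̂_{1,t})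 ⊙ m_{1,t−1}‖² ≤ n / ( (1−β₁₁₁)(1−β₂₁)(1−λ₁) ), where coordinates with v̂_{1,t} = 0 are interpreted as 0. -/
open Finset

/-!
Work coordinatewise. Convexity of `x ↦ x²` together with `β_{11j} ≤ β₁₁₁` gives
`m_s² ≤ ∑_{j ≤ s} β₁₁₁^{s-j} g_j²`. Writing `β₁₁₁^{s-j} = λ₁^{s-j} β₂₁^{s-j}` and bounding each
`β₂₁^{s-j} g_j²` by the whole second-moment sum, this is at most
`(1 - λ₁)⁻¹ v̂_s / (1 - β₂₁) ≤ (1 - λ₁)⁻¹ v̂_{s+1} / (1 - β₂₁)`. Summing over the `n` coordinates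
gives the bound, even without the factor `(1 - β₁₁₁)⁻¹`.
-/

noncomputable def discountedSum (r : ℝ) (a : ℕ → ℝ) (s : ℕ) : ℝ :=
  ∑ j ∈ Icc 1 s, r ^ (s - j) * a j

section DiscountedSum

variable {r q : ℝ} {a : ℕ → ℝ}

@[simp]
lemma discountedSum_zero : discountedSum r a 0 = 0 := by
  simp [discountedSum]

lemma discountedSum_succ (s : ℕ) :
    discountedSum r a (s + 1) = r * discountedSum r a s + a (s + 1) := by
  rw [discountedSum, discountedSum, sum_Icc_succ_top (by omega), mul_sum, Nat.sub_self,
    pow_zero, one_mul]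
  congr 1
  refine sum_congr rfl fun j hj => ?_
  rw [show s + 1 - j = s - j + 1 by grind, pow_succ]
  ring

lemma discountedSum_nonneg (hr : 0 ≤ r) (ha : ∀ j, 0 ≤ a j) (s : ℕ) :
    0 ≤ discountedSum r a s :=
  sum_nonneg fun j _ => mul_nonneg (pow_nonneg hr _) (ha j)

lemma discountedSum_one_le (hr₀ : 0 ≤ r) (hr₁ : r < 1) (s : ℕ) :
    discountedSum r 1 s ≤ 1 / (1 - r) := by
  induction s with
  | zero => simpa using hr₁.le
  | succ s ih =>
    have hfix : r * (1 / (1 - r)) + 1 = 1 / (1 - r) := by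
      field_simp [(sub_pos.2 hr₁).ne']
      ring
    rw [discountedSum_succ, Pi.one_apply]
    linarith [mul_le_mul_of_nonneg_left ih hr₀]

lemma discountedSum_mul_le (hr : 0 ≤ r) (hq : 0 ≤ q) (ha : ∀ j, 0 ≤ a j) (s : ℕ) :
    discountedSum (r * q) a s ≤ discountedSum r 1 s * discountedSum q a s := by
  rw [discountedSum, discountedSum, sum_mul]
  refine sum_le_sum fun j hj => ?_
  rw [mul_pow, Pi.one_apply, mul_one, mul_assoc]
  exact mul_le_mul_of_nonneg_left
    (single_le_sum (f := fun k => q ^ (s - k) * a k)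
      (fun k _ => mul_nonneg (pow_nonneg hq _) (ha k)) hj)
    (pow_nonneg hr _)

end DiscountedSum

lemma sq_le_discountedSum_of_recursion {B : ℝ} {b m g : ℕ → ℝ} (hb₀ : ∀ j, 0 ≤ b j)
    (hbB : ∀ j, b j ≤ B) (hB₁ : B ≤ 1) (hm₀ : m 0 = 0)
    (hm : ∀ j, m (j + 1) = b (j + 1) * m j + (1 - b (j + 1)) * g (j + 1)) (s : ℕ) :
    m s ^ 2 ≤ discountedSum B (fun j => g j ^ 2) s := by
  induction s with
  | zero => simp [hm₀]
  | succ s ih =>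
    have hb := hb₀ (s + 1)
    have hb₁ := (hbB (s + 1)).trans hB₁
    have convex : m (s + 1) ^ 2 ≤ b (s + 1) * m s ^ 2 + (1 - b (s + 1)) * g (s + 1) ^ 2 := by
      rw [hm]
      nlinarith [mul_nonneg (mul_nonneg hb (sub_nonneg.2 hb₁)) (sq_nonneg (m s - g (s + 1)))]
    have hD := discountedSum_nonneg ((hb₀ 0).trans (hbB 0)) (fun j => sq_nonneg (g j)) s
    rw [discountedSum_succ]
    nlinarith [mul_le_mul (hbB (s + 1)) ih (sq_nonneg _) (hb.trans (hbB (s + 1))),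
      mul_nonneg hb (sq_nonneg (g (s + 1)))]

lemma moment_sq_le_of_second_moment_le {β₁ β₂ v : ℝ} {b m g : ℕ → ℝ} (hβ₁ : 0 ≤ β₁)
    (hβ₁' : β₁ ≤ 1) (hβ₂ : 0 < β₂) (hβ₂' : β₂ < 1) (hlam : β₁ / β₂ < 1) (hb₀ : ∀ j, 0 ≤ b j)
    (hbβ₁ : ∀ j, b j ≤ β₁) (hm₀ : m 0 = 0)
    (hm : ∀ j, m (j + 1) = b (j + 1) * m j + (1 - b (j + 1)) * g (j + 1)) (s : ℕ)
    (hv : (1 - β₂) * discountedSum β₂ (fun j => g j ^ 2) s ≤ v) :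
    m s ^ 2 ≤ 1 / ((1 - β₂) * (1 - β₁ / β₂)) * v := by
  have hlam₀ : 0 ≤ β₁ / β₂ := div_nonneg hβ₁ hβ₂.le
  have hg : ∀ j, 0 ≤ g j ^ 2 := fun j => sq_nonneg _
  calc m s ^ 2 ≤ discountedSum β₁ (fun j => g j ^ 2) s :=
        sq_le_discountedSum_of_recursion hb₀ hbβ₁ hβ₁' hm₀ hm s
    _ = discountedSum (β₁ / β₂ * β₂) (fun j => g j ^ 2) s := by rw [div_mul_cancel₀ β₁ hβ₂.ne']
    _ ≤ discountedSum (β₁ / β₂) 1 s * discountedSum β₂ (fun j => g j ^ 2) s :=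
        discountedSum_mul_le hlam₀ hβ₂.le hg s
    _ ≤ 1 / (1 - β₁ / β₂) * (v / (1 - β₂)) :=
        mul_le_mul (discountedSum_one_le hlam₀ hlam s) ((le_div_iff₀' (sub_pos.2 hβ₂')).2 hv)
          (discountedSum_nonneg hβ₂.le hg s) (div_nonneg zero_le_one (sub_pos.2 hlam).le)
    _ = 1 / ((1 - β₂) * (1 - β₁ / β₂)) * v := by
        rw [one_div_mul_eq_div, one_div_mul_eq_div, div_div]

lemma sq_div_sqrt_le {x v c : ℝ} (hc : 0 ≤ c) (h : x ^ 2 ≤ c * v) : (x / √v) ^ 2 ≤ c := by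
  rcases le_or_gt v 0 with hv | hv
  · simpa [Real.sqrt_eq_zero'.2 hv] using hc
  · rwa [div_pow, Real.sq_sqrt hv.le, div_le_iff₀ hv]

/-- Lemma 5, bound (1) of the paper.  With time-varying decay
parameters `0 ≤ β_{11j} ≤ β₁₁₁`, the first-moment recursion
`m_{1,t} = β_{11t} m_{1,t−1} + (1−β_{11t}) g_{1,t}` (started at `0`), and a
coordinatewise nondecreasing family `v̂_{1,s}` dominating the exponential moving
average `(1−β₂₁) Σ_{j=1}^s β₂₁^{s−j} g_{1,j} ⊙ g_{1,j}` for every `s`, if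
`λ₁ = β₁₁₁/β₂₁ < 1` then
`‖(1/√v̂_{1,t}) ⊙ m_{1,t−1}‖² ≤ n/((1−β₁₁₁)(1−β₂₁)(1−λ₁))`.
(Coordinates with `v̂_{1,t} = 0` contribute `0`; Lean's division by zero is zero.) -/
theorem dnnAdam_previous_moment_normalized_bound
    (n t : ℕ)
    (β₁₁₁ β₂₁ : ℝ) (hβ₁ : 0 < β₁₁₁) (hβ₁' : β₁₁₁ < 1) (hβ₂ : 0 < β₂₁) (hβ₂' : β₂₁ < 1)
    (hlam : β₁₁₁ / β₂₁ < 1)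
    (β : ℕ → ℝ) (hβ0 : ∀ j, 0 ≤ β j) (hβub : ∀ j, β j ≤ β₁₁₁)
    (g : ℕ → Fin n → ℝ)
    (m : ℕ → Fin n → ℝ) (hm0 : ∀ i, m 0 i = 0)
    (hm : ∀ j i, m (j + 1) i = β (j + 1) * m j i + (1 - β (j + 1)) * g (j + 1) i)
    (vhat : ℕ → Fin n → ℝ)
    (hmono : ∀ s i, vhat s i ≤ vhat (s + 1) i)
    (hvhat : ∀ s i, (1 - β₂₁) * ∑ j ∈ Finset.Icc 1 s, β₂₁ ^ (s - j) * (g j i) ^ 2 ≤ vhat s i) :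
    ∑ i, (m (t - 1) i / Real.sqrt (vhat t i)) ^ 2
      ≤ (n : ℝ) / ((1 - β₁₁₁) * (1 - β₂₁) * (1 - β₁₁₁ / β₂₁)) := by
  have hden : 0 < (1 - β₂₁) * (1 - β₁₁₁ / β₂₁) := mul_pos (by linarith) (by linarith)
  have hconst : 1 / ((1 - β₂₁) * (1 - β₁₁₁ / β₂₁))
      ≤ 1 / ((1 - β₁₁₁) * (1 - β₂₁) * (1 - β₁₁₁ / β₂₁)) := by
    rw [mul_assoc]
    exact one_div_le_one_div_of_le (mul_pos (by linarith) hden) (by nlinarith)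
  have hcoord (i : Fin n) :
      (m (t - 1) i / √(vhat t i)) ^ 2 ≤ 1 / ((1 - β₂₁) * (1 - β₁₁₁ / β₂₁)) :=
    sq_div_sqrt_le (one_div_pos.2 hden).le <|
      moment_sq_le_of_second_moment_le (m := (m · i)) hβ₁.le hβ₁'.le hβ₂ hβ₂' hlam hβ0 hβub (hm0 i)
        (fun j => hm j i) (t - 1) ((hvhat (t - 1) i).trans
          (monotone_nat_of_le_succ (fun s => hmono s i) (t.sub_le 1)))
  calc ∑ i, (m (t - 1) i / √(vhat t i)) ^ 2
      ≤ ∑ _i : Fin n, 1 / ((1 - β₁₁₁) * (1 - β₂₁) * (1 - β₁₁₁ / β₂₁)) :=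
        sum_le_sum fun i _ => (hcoord i).trans hconst
    _ = (n : ℝ) / ((1 - β₁₁₁) * (1 - β₂₁) * (1 - β₁₁₁ / β₂₁)) := by
        rw [sum_const, card_univ, Fintype.card_fin, nsmul_eq_mul, mul_one_div]
end

section
/- Let 0 < β₁₂₁ < 1, 0 < β₂₂ < 1 with λ₂ := β₁₂₁/β₂₂ < 1, and let (β_{12j})_{j≥1} satisfy 0 ≤ β_{12j} ≤ β₁₂₁ for all j. Let g_{2,1}, …, g_{2,t} ∈ ℝ^{n×d} with |[g_{2,j}]_{pq}| ≤ G_{2,∞} for all j, p, q, define m_{2,t} = β_{12t} m_{2,t−1} + (1−β_{12t}) g_{2,t} with m_{2,0} = 0, and let v̂_{2,t} ∈ ℝ^{n×d} satisfy, entrywise, v̂_{2,t} ≥ (1−β₂₂) Σ_{j=1}^t β₂₂^{t−j} g_{2,j} ⊙ g_{2,j}. Then ‖(1/⁴√v̂_{2,t}) ⊙ m_{2,t}‖² ≤ n·d·G_{2,∞} / ( (1−β₁₂₁)·√(1−β₂₂)·(1−λ₂) ), where entries with v̂_{2,t} = 0 are interpreted as 0. -/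
/-! Fix one entry. Unrolling the recursion gives `|m_t| ≤ Σ_j β₁₂₁^{t-j} |g_j|`, and Cauchy–Schwarz
with weights `β₁₂₁^{t-j}` bounds `m_t²` by `(Σ_j β₁₂₁^{t-j}) · Σ_j β₁₂₁^{t-j} g_j²`. The first
factor is at most `1/(1-β₁₂₁)`. In the second, each term is divided by `√v̂`, and `v̂` dominates the
single summand `(1-β₂₂) β₂₂^{t-j} g_j²`; since `β₂₂^{2k} ≤ β₂₂^k` this gives
`√v̂ ≥ √(1-β₂₂) β₂₂^{t-j} |g_j|`, so the term is at most `G_{2,∞}/√(1-β₂₂) · λ₂^{t-j}`, and the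
geometric series in `λ₂` sums to at most `1/(1-λ₂)`. Summing the entry bound over the `n·d` entries
finishes the proof. -/

open Finset

theorem sum_Icc_one_succ_pow_sub_mul {R : Type*} [CommSemiring R] (b : R) (x : ℕ → R) (s : ℕ) :
    ∑ j ∈ Icc 1 (s + 1), b ^ (s + 1 - j) * x j
      = b * ∑ j ∈ Icc 1 s, b ^ (s - j) * x j + x (s + 1) := by
  rw [sum_Icc_succ_top (by omega), Nat.sub_self, pow_zero, one_mul, mul_sum]
  congr 1
  refine sum_congr rfl fun j hj => ?_
  rw [Nat.sub_add_comm (mem_Icc.mp hj).2, pow_succ]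
  ring

theorem sum_Icc_one_pow_sub_le {r : ℝ} (hr₀ : 0 ≤ r) (hr₁ : r < 1) (t : ℕ) :
    ∑ j ∈ Icc 1 t, r ^ (t - j) ≤ 1 / (1 - r) := by
  induction t with
  | zero =>
    simp only [Icc_eq_empty_of_lt zero_lt_one, sum_empty]
    exact one_div_nonneg.mpr (by linarith)
  | succ s ih =>
    have h := sum_Icc_one_succ_pow_sub_mul r (fun _ => 1) s
    simp only [mul_one] at h
    rw [h]
    calc r * ∑ j ∈ Icc 1 s, r ^ (s - j) + 1 ≤ r * (1 / (1 - r)) + 1 := by gcongr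
      _ = 1 / (1 - r) := by field_simp [(by linarith : (1 - r) ≠ 0)]; ring

theorem abs_le_sum_Icc_pow_mul_abs_of_momentum {b : ℝ} (hb : b ≤ 1) {β g m : ℕ → ℝ}
    (hβ₀ : ∀ j, 0 ≤ β j) (hβb : ∀ j, β j ≤ b) (hm₀ : m 0 = 0)
    (hm : ∀ j, m (j + 1) = β (j + 1) * m j + (1 - β (j + 1)) * g (j + 1)) (s : ℕ) :
    |m s| ≤ ∑ j ∈ Icc 1 s, b ^ (s - j) * |g j| := by
  induction s with
  | zero => simp [hm₀]
  | succ s ih =>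
    have hβ₀' := hβ₀ (s + 1)
    have hβ₁' : 0 ≤ 1 - β (s + 1) := by linarith [hβb (s + 1)]
    rw [sum_Icc_one_succ_pow_sub_mul, hm]
    calc |β (s + 1) * m s + (1 - β (s + 1)) * g (s + 1)|
        ≤ β (s + 1) * |m s| + (1 - β (s + 1)) * |g (s + 1)| := by
          refine (abs_add_le _ _).trans_eq ?_
          rw [abs_mul, abs_mul, abs_of_nonneg hβ₀', abs_of_nonneg hβ₁']
      _ ≤ b * ∑ j ∈ Icc 1 s, b ^ (s - j) * |g j| + |g (s + 1)| := by
          gcongr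
          · exact hβ₀'.trans (hβb _)
          · exact hβb _
          · exact mul_le_of_le_one_left (abs_nonneg _) (by linarith)

theorem sq_le_sum_Icc_pow_mul_sum_of_momentum {b : ℝ} (hb : b ≤ 1) {β g m : ℕ → ℝ}
    (hβ₀ : ∀ j, 0 ≤ β j) (hβb : ∀ j, β j ≤ b) (hm₀ : m 0 = 0)
    (hm : ∀ j, m (j + 1) = β (j + 1) * m j + (1 - β (j + 1)) * g (j + 1)) (t : ℕ) :
    m t ^ 2 ≤ (∑ j ∈ Icc 1 t, b ^ (t - j)) * ∑ j ∈ Icc 1 t, b ^ (t - j) * g j ^ 2 := by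
  have hb₀ : 0 ≤ b := (hβ₀ 0).trans (hβb 0)
  calc m t ^ 2 = |m t| ^ 2 := (sq_abs _).symm
    _ ≤ (∑ j ∈ Icc 1 t, b ^ (t - j) * |g j|) ^ 2 := by
        gcongr
        exact abs_le_sum_Icc_pow_mul_abs_of_momentum hb hβ₀ hβb hm₀ hm t
    _ ≤ _ := sum_sq_le_sum_mul_sum_of_sq_le_mul _ (fun j _ => by positivity)
        (fun j _ => by positivity) (fun j _ => le_of_eq (by rw [mul_pow, sq_abs]; ring))

theorem sq_div_sqrt_le_abs_div {x v c : ℝ} (hc : 0 < c) (h : (c * x) ^ 2 ≤ v) :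
    x ^ 2 / √v ≤ |x| / c := by
  rcases eq_or_ne x 0 with rfl | hx
  · simp
  have hcx : c * |x| ≤ √v := by simpa [abs_mul, abs_of_pos hc] using Real.abs_le_sqrt h
  calc x ^ 2 / √v ≤ x ^ 2 / (c * |x|) := by gcongr
    _ = |x| / c := by rw [← sq_abs]; field_simp

theorem pow_mul_sq_div_sqrt_le {b₁ b₂ G x v : ℝ} (k : ℕ) (hb₁ : 0 ≤ b₁) (hb₂ : 0 < b₂)
    (hb₂' : b₂ < 1) (hx : |x| ≤ G) (hv : (1 - b₂) * (b₂ ^ k * x ^ 2) ≤ v) :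
    b₁ ^ k * x ^ 2 / √v ≤ G / √(1 - b₂) * (b₁ / b₂) ^ k := by
  have hs : 0 < √(1 - b₂) := Real.sqrt_pos.mpr (by linarith)
  have hcx : (√(1 - b₂) * b₂ ^ k * x) ^ 2 ≤ v := calc
    (√(1 - b₂) * b₂ ^ k * x) ^ 2 = (1 - b₂) * (b₂ ^ k * (b₂ ^ k * x ^ 2)) := by
        rw [mul_pow, mul_pow, Real.sq_sqrt (by linarith)]; ring
    _ ≤ (1 - b₂) * (b₂ ^ k * x ^ 2) := mul_le_mul_of_nonneg_left
        (mul_le_of_le_one_left (by positivity) (pow_le_one₀ hb₂.le hb₂'.le)) (by linarith)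
    _ ≤ v := hv
  calc b₁ ^ k * x ^ 2 / √v = b₁ ^ k * (x ^ 2 / √v) := mul_div_assoc _ _ _
    _ ≤ b₁ ^ k * (|x| / (√(1 - b₂) * b₂ ^ k)) :=
        mul_le_mul_of_nonneg_left (sq_div_sqrt_le_abs_div (by positivity) hcx) (by positivity)
    _ = |x| / √(1 - b₂) * (b₁ / b₂) ^ k := by rw [div_pow]; field_simp
    _ ≤ G / √(1 - b₂) * (b₁ / b₂) ^ k := by gcongr

theorem sum_Icc_pow_mul_sq_div_sqrt_le {b₁ b₂ G v : ℝ} {g : ℕ → ℝ} {t : ℕ} (hb₁ : 0 ≤ b₁)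
    (hb₂ : 0 < b₂) (hb₂' : b₂ < 1) (hlam : b₁ / b₂ < 1) (hG : 0 ≤ G)
    (hg : ∀ j ∈ Icc 1 t, |g j| ≤ G)
    (hv : (1 - b₂) * ∑ j ∈ Icc 1 t, b₂ ^ (t - j) * g j ^ 2 ≤ v) :
    (∑ j ∈ Icc 1 t, b₁ ^ (t - j) * g j ^ 2) / √v ≤ G / √(1 - b₂) * (1 / (1 - b₁ / b₂)) := by
  have hterm : ∀ j ∈ Icc 1 t, (1 - b₂) * (b₂ ^ (t - j) * g j ^ 2) ≤ v := fun j hj =>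
    (mul_le_mul_of_nonneg_left (single_le_sum (f := fun i => b₂ ^ (t - i) * g i ^ 2)
      (fun i _ => by positivity) hj) (by linarith)).trans hv
  rw [sum_div]
  calc ∑ j ∈ Icc 1 t, b₁ ^ (t - j) * g j ^ 2 / √v
      ≤ ∑ j ∈ Icc 1 t, G / √(1 - b₂) * (b₁ / b₂) ^ (t - j) :=
        sum_le_sum fun j hj => pow_mul_sq_div_sqrt_le _ hb₁ hb₂ hb₂' (hg j hj) (hterm j hj)
    _ = G / √(1 - b₂) * ∑ j ∈ Icc 1 t, (b₁ / b₂) ^ (t - j) := (mul_sum _ _ _).symm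
    _ ≤ G / √(1 - b₂) * (1 / (1 - b₁ / b₂)) := by
        gcongr
        exact sum_Icc_one_pow_sub_le (by positivity) hlam t

theorem momentum_sq_div_sqrt_sqrt_le {b₁ b₂ G : ℝ} (hb₁ : b₁ < 1) (hb₂ : 0 < b₂) (hb₂' : b₂ < 1)
    (hlam : b₁ / b₂ < 1) {β g m : ℕ → ℝ} (hβ₀ : ∀ j, 0 ≤ β j) (hβb : ∀ j, β j ≤ b₁)
    (hg : ∀ j, 1 ≤ j → |g j| ≤ G) (hm₀ : m 0 = 0)
    (hm : ∀ j, m (j + 1) = β (j + 1) * m j + (1 - β (j + 1)) * g (j + 1)) {t : ℕ} {v : ℝ}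
    (hv : (1 - b₂) * ∑ j ∈ Icc 1 t, b₂ ^ (t - j) * g j ^ 2 ≤ v) :
    (m t / √(√v)) ^ 2 ≤ G / ((1 - b₁) * √(1 - b₂) * (1 - b₁ / b₂)) := by
  have hb₀ : 0 ≤ b₁ := (hβ₀ 0).trans (hβb 0)
  have hG : 0 ≤ G := (abs_nonneg _).trans (hg 1 le_rfl)
  have hS : 0 ≤ (∑ j ∈ Icc 1 t, b₁ ^ (t - j) * g j ^ 2) / √v := by positivity
  rw [div_pow, Real.sq_sqrt (Real.sqrt_nonneg v)]
  calc m t ^ 2 / √v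
      ≤ (∑ j ∈ Icc 1 t, b₁ ^ (t - j)) * (∑ j ∈ Icc 1 t, b₁ ^ (t - j) * g j ^ 2) / √v := by
        gcongr
        exact sq_le_sum_Icc_pow_mul_sum_of_momentum hb₁.le hβ₀ hβb hm₀ hm t
    _ = (∑ j ∈ Icc 1 t, b₁ ^ (t - j)) * ((∑ j ∈ Icc 1 t, b₁ ^ (t - j) * g j ^ 2) / √v) :=
        mul_div_assoc _ _ _
    _ ≤ 1 / (1 - b₁) * (G / √(1 - b₂) * (1 / (1 - b₁ / b₂))) :=
        mul_le_mul (sum_Icc_one_pow_sub_le hb₀ hb₁ t)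
          (sum_Icc_pow_mul_sq_div_sqrt_le hb₀ hb₂ hb₂' hlam hG
            (fun j hj => hg j (mem_Icc.mp hj).1) hv)
          hS (one_div_nonneg.mpr (by linarith))
    _ = G / ((1 - b₁) * √(1 - b₂) * (1 - b₁ / b₂)) := by field_simp

theorem dnnAdam_second_layer_fourth_root_bound_general
    (n d t : ℕ)
    (β₁₂₁ β₂₂ G2inf : ℝ) (hβ₁' : β₁₂₁ < 1) (hβ₂ : 0 < β₂₂) (hβ₂' : β₂₂ < 1)
    (hlam : β₁₂₁ / β₂₂ < 1)
    (β : ℕ → ℝ) (hβ0 : ∀ j, 0 ≤ β j) (hβub : ∀ j, β j ≤ β₁₂₁)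
    (g : ℕ → Matrix (Fin n) (Fin d) ℝ)
    (hg : ∀ j, 1 ≤ j → ∀ p q, |g j p q| ≤ G2inf)
    (m : ℕ → Matrix (Fin n) (Fin d) ℝ) (hm0 : ∀ p q, m 0 p q = 0)
    (hm : ∀ j p q, m (j + 1) p q = β (j + 1) * m j p q + (1 - β (j + 1)) * g (j + 1) p q)
    (vhat : Matrix (Fin n) (Fin d) ℝ)
    (hvhat : ∀ p q,
      (1 - β₂₂) * ∑ j ∈ Finset.Icc 1 t, β₂₂ ^ (t - j) * (g j p q) ^ 2 ≤ vhat p q) :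
    ∑ p, ∑ q, (m t p q / Real.sqrt (Real.sqrt (vhat p q))) ^ 2
      ≤ (n : ℝ) * (d : ℝ) * G2inf
          / ((1 - β₁₂₁) * Real.sqrt (1 - β₂₂) * (1 - β₁₂₁ / β₂₂)) :=
  calc ∑ p, ∑ q, (m t p q / √(√(vhat p q))) ^ 2
      ≤ ∑ _p : Fin n, ∑ _q : Fin d, G2inf / ((1 - β₁₂₁) * √(1 - β₂₂) * (1 - β₁₂₁ / β₂₂)) := by
        gcongr with p _ q _
        exact momentum_sq_div_sqrt_sqrt_le (m := fun s => m s p q) hβ₁' hβ₂ hβ₂' hlam hβ0 hβub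
          (fun j hj => hg j hj p q) (hm0 p q) (fun j => hm j p q) (hvhat p q)
    _ = _ := by
        simp only [sum_const, card_univ, Fintype.card_fin, nsmul_eq_mul]
        ring

/-- Lemma 5, bound (4) of the paper.  With time-varying decay
parameters `0 ≤ β_{12j} ≤ β₁₂₁`, entrywise-bounded gradients `|[g_{2,j}]_{pq}| ≤ G_{2,∞}`,
the recursion `m_{2,t} = β_{12t} m_{2,t−1} + (1−β_{12t}) g_{2,t}` (started at `0`), and
any `v̂_{2,t}` dominating entrywise the exponential moving average
`(1−β₂₂) Σ_{j=1}^t β₂₂^{t−j} g_{2,j} ⊙ g_{2,j}`, if `λ₂ = β₁₂₁/β₂₂ < 1` then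
`‖(1/⁴√v̂_{2,t}) ⊙ m_{2,t}‖² ≤ n·d·G_{2,∞}/((1−β₁₂₁)·√(1−β₂₂)·(1−λ₂))` in the
Frobenius norm, where `⁴√x = √(√x)` entrywise.
(Entries with `v̂_{2,t} = 0` contribute `0`; Lean's division by zero is zero.) -/
theorem dnnAdam_second_layer_fourth_root_bound
    (n d t : ℕ)
    (β₁₂₁ β₂₂ G2inf : ℝ) (hβ₁ : 0 < β₁₂₁) (hβ₁' : β₁₂₁ < 1) (hβ₂ : 0 < β₂₂) (hβ₂' : β₂₂ < 1)
    (hlam : β₁₂₁ / β₂₂ < 1)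
    (β : ℕ → ℝ) (hβ0 : ∀ j, 0 ≤ β j) (hβub : ∀ j, β j ≤ β₁₂₁)
    (g : ℕ → Matrix (Fin n) (Fin d) ℝ)
    (hg : ∀ j, 1 ≤ j → ∀ p q, |g j p q| ≤ G2inf)
    (m : ℕ → Matrix (Fin n) (Fin d) ℝ) (hm0 : ∀ p q, m 0 p q = 0)
    (hm : ∀ j p q, m (j + 1) p q = β (j + 1) * m j p q + (1 - β (j + 1)) * g (j + 1) p q)
    (vhat : Matrix (Fin n) (Fin d) ℝ)
    (hvhat : ∀ p q,
      (1 - β₂₂) * ∑ j ∈ Finset.Icc 1 t, β₂₂ ^ (t - j) * (g j p q) ^ 2 ≤ vhat p q) :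
    ∑ p, ∑ q, (m t p q / Real.sqrt (Real.sqrt (vhat p q))) ^ 2
      ≤ (n : ℝ) * (d : ℝ) * G2inf
          / ((1 - β₁₂₁) * Real.sqrt (1 - β₂₂) * (1 - β₁₂₁ / β₂₂)) :=
  dnnAdam_second_layer_fourth_root_bound_general n d t β₁₂₁ β₂₂ G2inf hβ₁' hβ₂ hβ₂' hlam β hβ0 hβub
    g hg m hm0 hm vhat hvhat
end
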